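/- arXiv:2003.04554 — 5 statements merged into one kernel-verified Lean document; each statement's English description precedes it below -/
import Mathlib

section
/- Let 1 ≤ p < ∞, let X be a complex Banach space, let N ∈ ℕ, let x_1,…,x_N ∈ X, and let a_1,…,a_N, b_1,…,b_N ∈ ℂ satisfy |a_j| ≤ |b_j| for all j = 1,…,N. Then (∑_{ε∈{−1,1}^N} ‖∑_{j=1}^N ε_j a_j x_j‖_X^p)^{1/p} ≤ 2 · (∑_{ε∈{−1,1}^N} ‖∑_{j=1}^N ε_j b_j x_j‖_X^p)^{1/p}. (Kahane's contraction principle, in the discrete sign formulation.) -/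
/-!
For real coefficients `t ∈ [-1, 1]`, the `ℓ^p` norm of `∑ j, ε_j t_j y_j` over the sign vectors
`ε` is a convex function of each `t_k` (triangle inequality) and is even in it (flip `ε_k`), so
it does not exceed its value at `t_k = 1`; this gives the real contraction principle with
constant `1`. Complex coefficients are split into real and imaginary parts, which costs the
factor `2`.
-/

open Finset

noncomputable def sumLpNorm {Ω X : Type*} [Fintype Ω] [Norm X] (p : ℝ) (f : Ω → X) : ℝ :=
  (∑ ω, ‖f ω‖ ^ p) ^ (1 / p)

section sumLpNorm

variable {Ω X : Type*} [Fintype Ω] [NormedAddCommGroup X] {p : ℝ}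

theorem sumLpNorm_add_le (hp : 1 ≤ p) (f g : Ω → X) :
    sumLpNorm p (f + g) ≤ sumLpNorm p f + sumLpNorm p g := by
  refine le_trans ?_ (Real.Lp_add_le_of_nonneg _ hp (fun ω _ => norm_nonneg (f ω))
    (fun ω _ => norm_nonneg (g ω)))
  refine Real.rpow_le_rpow (by positivity) (sum_le_sum fun ω _ => ?_) (by positivity)
  exact Real.rpow_le_rpow (norm_nonneg _) (norm_add_le _ _) (by linarith)

theorem sumLpNorm_smul {𝕜 : Type*} [NormedField 𝕜] [NormedSpace 𝕜 X] (hp : p ≠ 0)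
    (c : 𝕜) (f : Ω → X) : sumLpNorm p (c • f) = ‖c‖ * sumLpNorm p f := by
  simp only [sumLpNorm, Pi.smul_apply, norm_smul,
    Real.mul_rpow (norm_nonneg c) (norm_nonneg _), ← mul_sum]
  rw [Real.mul_rpow (by positivity) (by positivity), ← Real.rpow_mul (norm_nonneg c),
    mul_one_div_cancel hp, Real.rpow_one]

theorem sumLpNorm_comp_equiv (e : Ω ≃ Ω) (f : Ω → X) : sumLpNorm p (f ∘ e) = sumLpNorm p f := by
  simp only [sumLpNorm, Function.comp_apply, Equiv.sum_comp e (fun ω => ‖f ω‖ ^ p)]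

end sumLpNorm

def flipSign {ι : Type*} [DecidableEq ι] (k : ι) : Equiv.Perm (ι → Bool) :=
  Function.Involutive.toPerm (fun ε => Function.update ε k (!ε k)) fun ε => by
    ext j
    rcases eq_or_ne j k with rfl | h <;> simp [Function.update_of_ne, *]

@[simp]
theorem flipSign_apply {ι : Type*} [DecidableEq ι] (k : ι) (ε : ι → Bool) :
    flipSign k ε = Function.update ε k (!ε k) :=
  rfl

/-- `∑ j, ε_j y_j`, with the sign `ε_j = ±1` encoded by `ε j : Bool`. -/
def signSum {ι X : Type*} [Fintype ι] [AddCommGroup X] (ε : ι → Bool) (y : ι → X) : X :=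
  ∑ j, if ε j then y j else -y j

section signSum

variable {ι X : Type*} [Fintype ι] [AddCommGroup X]

theorem signSum_add (ε : ι → Bool) (y z : ι → X) :
    signSum ε (y + z) = signSum ε y + signSum ε z := by
  simp only [signSum, ← sum_add_distrib, Pi.add_apply]
  exact sum_congr rfl fun j _ => by split_ifs <;> abel

theorem signSum_smul {R : Type*} [Monoid R] [DistribMulAction R X] (ε : ι → Bool) (c : R)
    (y : ι → X) : signSum ε (c • y) = c • signSum ε y := by
  simp only [signSum, smul_sum, Pi.smul_apply]
  exact sum_congr rfl fun j _ => by split_ifs <;> simp [smul_neg]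

variable [DecidableEq ι]

theorem signSum_flipSign (k : ι) (ε : ι → Bool) (y : ι → X) :
    signSum (flipSign k ε) y = signSum ε (Function.update y k (-y k)) := by
  refine sum_congr rfl fun j _ => ?_
  rcases eq_or_ne j k with rfl | h
  · cases h : ε j <;> simp [h]
  · simp [Function.update_of_ne h]

end signSum

section contraction

variable {ι X : Type*} [Fintype ι] [DecidableEq ι] [NormedAddCommGroup X] [NormedSpace ℝ X]
  {p : ℝ}

theorem sumLpNorm_signSum_update_smul_le (hp : 1 ≤ p) (y : ι → X) (k : ι) {c : ℝ}
    (hc : |c| ≤ 1) :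
    sumLpNorm p (fun ε => signSum ε (Function.update y k (c • y k)))
      ≤ sumLpNorm p (fun ε => signSum ε y) := by
  obtain ⟨hc₁, hc₂⟩ := abs_le.mp hc
  -- `c • y k` is the convex combination of `y k` and `-y k` with weights `(1 ± c) / 2`.
  have hconvex : Function.update y k (c • y k)
      = ((1 + c) / 2) • y + ((1 - c) / 2) • Function.update y k (-y k) := by
    ext j
    rcases eq_or_ne j k with rfl | h
    · simp only [Function.update_self, Pi.add_apply, Pi.smul_apply]
      module
    · simp only [Function.update_of_ne h, Pi.add_apply, Pi.smul_apply]
      module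
  have hflip : sumLpNorm p (fun ε => signSum ε (Function.update y k (-y k)))
      = sumLpNorm p (fun ε => signSum ε y) := by
    rw [← sumLpNorm_comp_equiv (flipSign k)]
    simp only [Function.comp_def, signSum_flipSign, Function.update_idem, Function.update_self,
      neg_neg, Function.update_eq_self]
  have hp₀ : p ≠ 0 := by linarith
  calc sumLpNorm p (fun ε => signSum ε (Function.update y k (c • y k)))
      = sumLpNorm p (((1 + c) / 2) • (fun ε => signSum ε y)
          + ((1 - c) / 2) • fun ε => signSum ε (Function.update y k (-y k))) := by
        simp only [hconvex, signSum_add, signSum_smul]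
        rfl
    _ ≤ ((1 + c) / 2) * sumLpNorm p (fun ε => signSum ε y)
          + ((1 - c) / 2) * sumLpNorm p (fun ε => signSum ε y) := by
        refine (sumLpNorm_add_le hp _ _).trans_eq ?_
        rw [sumLpNorm_smul hp₀, sumLpNorm_smul hp₀, hflip, Real.norm_of_nonneg (by linarith),
          Real.norm_of_nonneg (by linarith)]
    _ = sumLpNorm p (fun ε => signSum ε y) := by ring

theorem sumLpNorm_signSum_smul_le (hp : 1 ≤ p) (y : ι → X) {t : ι → ℝ}
    (ht : ∀ j, |t j| ≤ 1) :
    sumLpNorm p (fun ε => signSum ε (t • y)) ≤ sumLpNorm p (fun ε => signSum ε y) := by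
  suffices ∀ s : Finset ι,
      sumLpNorm p (fun ε => signSum ε fun j => if j ∈ s then t j • y j else y j)
        ≤ sumLpNorm p (fun ε => signSum ε y) by
    have h := this univ
    simp only [mem_univ, if_true] at h
    exact h
  intro s
  induction s using Finset.induction_on with
  | empty => simp
  | @insert k s hk ih =>
    refine le_trans (le_of_eq ?_) ((sumLpNorm_signSum_update_smul_le hp _ k (ht k)).trans ih)
    congr! 3 with ε
    ext j
    rcases eq_or_ne j k with rfl | h <;> simp [Function.update_of_ne, *]

end contraction

theorem sumLpNorm_signSum_smul_le_two_mul {ι X : Type*} [Fintype ι] [DecidableEq ι]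
    [NormedAddCommGroup X] [NormedSpace ℂ X] {p : ℝ} (hp : 1 ≤ p) (y : ι → X) {c : ι → ℂ}
    (hc : ∀ j, ‖c j‖ ≤ 1) :
    sumLpNorm p (fun ε => signSum ε (c • y)) ≤ 2 * sumLpNorm p (fun ε => signSum ε y) := by
  have hsplit : c • y = (fun j => (c j).re) • y + Complex.I • (fun j => (c j).im) • y := by
    ext j
    simp only [Pi.add_apply, Pi.smul_apply', Pi.smul_apply]
    nth_rewrite 1 [← Complex.re_add_im (c j)]
    rw [add_smul, mul_comm, mul_smul, Complex.coe_smul, Complex.coe_smul]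
  calc sumLpNorm p (fun ε => signSum ε (c • y))
      = sumLpNorm p ((fun ε => signSum ε ((fun j => (c j).re) • y))
          + Complex.I • fun ε => signSum ε ((fun j => (c j).im) • y)) := by
        simp only [hsplit, signSum_add, signSum_smul]
        rfl
    _ ≤ sumLpNorm p (fun ε => signSum ε ((fun j => (c j).re) • y))
          + sumLpNorm p (fun ε => signSum ε ((fun j => (c j).im) • y)) := by
        refine (sumLpNorm_add_le hp _ _).trans_eq ?_
        rw [sumLpNorm_smul (by linarith), Complex.norm_I, one_mul]
    _ ≤ 2 * sumLpNorm p (fun ε => signSum ε y) := by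
        rw [two_mul]
        exact add_le_add
          (sumLpNorm_signSum_smul_le hp y fun j => (Complex.abs_re_le_norm _).trans (hc j))
          (sumLpNorm_signSum_smul_le hp y fun j => (Complex.abs_im_le_norm _).trans (hc j))

theorem exists_norm_le_one_and_eq_mul {𝕜 : Type*} [NormedField 𝕜] {a b : 𝕜}
    (h : ‖a‖ ≤ ‖b‖) : ∃ c : 𝕜, ‖c‖ ≤ 1 ∧ a = c * b := by
  rcases eq_or_ne b 0 with rfl | hb
  · exact ⟨0, by simp, by simpa using h⟩
  · refine ⟨a / b, ?_, (div_mul_cancel₀ a hb).symm⟩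
    rwa [norm_div, div_le_one (norm_pos_iff.mpr hb)]

theorem kahane_contraction_principle_general
    {X : Type*} [NormedAddCommGroup X] [NormedSpace ℂ X]
    (p : ℝ) (hp : 1 ≤ p) (N : ℕ) (x : Fin N → X) (a b : Fin N → ℂ)
    (hab : ∀ j, ‖a j‖ ≤ ‖b j‖) :
    (∑ ε : Fin N → Bool,
        ‖∑ j, (if ε j then a j • x j else -(a j • x j))‖ ^ p) ^ (1 / p)
      ≤ 2 * (∑ ε : Fin N → Bool,
        ‖∑ j, (if ε j then b j • x j else -(b j • x j))‖ ^ p) ^ (1 / p) := by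
  choose c hc hac using fun j => exists_norm_le_one_and_eq_mul (hab j)
  have hcoeff : (fun j => a j • x j) = c • fun j => b j • x j := by
    ext j
    simp [hac j, mul_smul]
  have h := sumLpNorm_signSum_smul_le_two_mul hp (fun j => b j • x j) hc
  rwa [← hcoeff] at h

/-- **Kahane's contraction principle** (discrete sign formulation).
If `|a j| ≤ |b j|` for all `j`, then the `p`-th moment (over all sign vectors
`ε ∈ {−1,1}^N`) of `‖∑ j ε_j a_j x_j‖` is bounded by twice that of
`‖∑ j ε_j b_j x_j‖`. -/
theorem kahane_contraction_principle
    {X : Type*} [NormedAddCommGroup X] [NormedSpace ℂ X] [CompleteSpace X]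
    (p : ℝ) (hp : 1 ≤ p) (N : ℕ) (x : Fin N → X) (a b : Fin N → ℂ)
    (hab : ∀ j, ‖a j‖ ≤ ‖b j‖) :
    (∑ ε : Fin N → Bool,
        ‖∑ j, (if ε j then a j • x j else -(a j • x j))‖ ^ p) ^ (1 / p)
      ≤ 2 * (∑ ε : Fin N → Bool,
        ‖∑ j, (if ε j then b j • x j else -(b j • x j))‖ ^ p) ^ (1 / p) :=
  kahane_contraction_principle_general p hp N x a b hab
end

section
/- Let X and Y be complex Banach spaces, p ∈ [1,∞), and let 𝒯 be an R_p-bounded family of bounded linear operators from X to Y with bound C. Then the closure of the convex hull of 𝒯 in the strong operator topology is again R_p-bounded with bound at most C. Here the strong-operator closure of conv 𝒯 consists of all bounded linear operators S : X → Y such that for every finite set x_1,…,x_N ∈ X and every ε > 0 there exist n ∈ ℕ, operators T_1,…,T_n ∈ 𝒯 and λ_1,…,λ_n ∈ [0,1] with ∑_{k=1}^n λ_k = 1 and ‖S x_j − ∑_{k=1}^n λ_k T_k x_j‖_Y < ε for all j = 1,…,N. -/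
open scoped BigOperators

/-- Discrete sign formulation of `R_p`-boundedness of a family `𝒯 ⊆ L(X,Y)`
with bound `C`: for all `N`, all `T_1, …, T_N ∈ 𝒯` and `x_1, …, x_N ∈ X`,
`(∑_{ε ∈ {−1,1}^N} ‖∑ j ε_j T_j x_j‖^p)^{1/p} ≤ C (∑_{ε ∈ {−1,1}^N} ‖∑ j ε_j x_j‖^p)^{1/p}`. -/
def IsRpBoundedWith (p : ℝ) {X Y : Type*} [NormedAddCommGroup X] [NormedSpace ℂ X]
    [NormedAddCommGroup Y] [NormedSpace ℂ Y] (𝒯 : Set (X →L[ℂ] Y)) (C : ℝ) : Prop :=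
  ∀ (N : ℕ) (T : Fin N → X →L[ℂ] Y), (∀ j, T j ∈ 𝒯) → ∀ x : Fin N → X,
    (∑ ε : Fin N → Bool,
        ‖∑ j, (if ε j then T j (x j) else -(T j (x j)))‖ ^ p) ^ (1 / p)
      ≤ C * (∑ ε : Fin N → Bool,
        ‖∑ j, (if ε j then x j else -(x j))‖ ^ p) ^ (1 / p)

/-- The closure of the convex hull of a set of operators in the strong operator
topology: `S` belongs to it iff for every finite set of vectors and every
`ε > 0` there is a finite convex combination of members of `𝒯` that is
`ε`-close to `S` on these vectors. -/
def StrongClosureConvexHull {X Y : Type*} [NormedAddCommGroup X] [NormedSpace ℂ X]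
    [NormedAddCommGroup Y] [NormedSpace ℂ Y] (𝒯 : Set (X →L[ℂ] Y)) :
    Set (X →L[ℂ] Y) :=
  {S | ∀ (N : ℕ) (x : Fin N → X) (ε : ℝ), 0 < ε →
    ∃ (n : ℕ) (T : Fin n → X →L[ℂ] Y) (l : Fin n → ℝ),
      (∀ k, T k ∈ 𝒯) ∧ (∀ k, l k ∈ Set.Icc (0 : ℝ) 1) ∧ (∑ k, l k = 1) ∧
      ∀ j, ‖S (x j) - ∑ k, l k • T k (x j)‖ < ε}

/-! For fixed vectors `x_j`, the Rademacher norm `y ↦ (∑_ε ‖∑_j ε_j y_j‖^p)^{1/p}` on `Y^N` is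
the norm of a bounded linear map into `ℓ^p({−1,1}^N; Y)`, so its sublevel sets are closed and
convex. The `R_p`-bound of `𝒯` puts the product of the orbits `{T x_j | T ∈ 𝒯}` into such a
sublevel set, hence also its closed convex hull, which is the product of the closed convex hulls
of the orbits; and `S x_j` lies in the closed convex hull of the `j`-th orbit. -/

open Set

section ClosedConvexHull

variable {𝕜 ι : Type*} {E : ι → Type*} [Finite ι] [Field 𝕜] [LinearOrder 𝕜]
  [IsStrictOrderedRing 𝕜] [∀ i, AddCommGroup (E i)] [∀ i, Module 𝕜 (E i)]
  [∀ i, TopologicalSpace (E i)] [∀ i, IsTopologicalAddGroup (E i)]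
  [∀ i, ContinuousConstSMul 𝕜 (E i)]

theorem closedConvexHull_pi (t : ∀ i, Set (E i)) :
    closedConvexHull 𝕜 (univ.pi t) = univ.pi fun i => closedConvexHull 𝕜 (t i) := by
  simp only [closedConvexHull_eq_closure_convexHull, convexHull_pi, closure_pi_set]

end ClosedConvexHull

section RademacherNorm

variable {E : Type*} [NormedAddCommGroup E] {N : ℕ}

noncomputable def rademacherNorm (p : ℝ) (y : Fin N → E) : ℝ :=
  (∑ ε : Fin N → Bool, ‖∑ j, (if ε j then y j else -(y j))‖ ^ p) ^ (1 / p)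

variable [NormedSpace ℝ E]

def signedSum (ε : Fin N → Bool) : (Fin N → E) →L[ℝ] E :=
  ∑ j, if ε j then ContinuousLinearMap.proj j else -ContinuousLinearMap.proj j

theorem signedSum_apply (ε : Fin N → Bool) (y : Fin N → E) :
    signedSum ε y = ∑ j, (if ε j then y j else -(y j)) := by
  simp only [signedSum, FunLike.coe_sum, Finset.sum_apply]
  congr! 1 with j
  split_ifs <;> rfl

def rademacherMap (p : ℝ) (N : ℕ) :
    (Fin N → E) →L[ℝ] PiLp (ENNReal.ofReal p) fun _ : Fin N → Bool => E :=
  (PiLp.continuousLinearEquiv _ ℝ _).symm.toContinuousLinearMap.comp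
    (ContinuousLinearMap.pi signedSum)

theorem rademacherNorm_eq_norm_rademacherMap {p : ℝ} (hp : 0 < p) (y : Fin N → E) :
    rademacherNorm p y = ‖rademacherMap p N y‖ := by
  have hp' : (ENNReal.ofReal p).toReal = p := ENNReal.toReal_ofReal hp.le
  rw [PiLp.norm_eq_sum (hp'.symm ▸ hp), hp']
  simp [rademacherMap, rademacherNorm, signedSum_apply]

theorem setOf_rademacherNorm_le_eq_preimage {p : ℝ} [Fact (1 ≤ ENNReal.ofReal p)] (M : ℝ) :
    {y : Fin N → E | rademacherNorm p y ≤ M} = rademacherMap p N ⁻¹' Metric.closedBall 0 M := by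
  have hp : 0 < p := zero_lt_one.trans_le (ENNReal.one_le_ofReal.mp Fact.out)
  ext y
  simp [rademacherNorm_eq_norm_rademacherMap hp]

theorem isClosed_setOf_rademacherNorm_le {p : ℝ} (hp : 1 ≤ p) (M : ℝ) :
    IsClosed {y : Fin N → E | rademacherNorm p y ≤ M} := by
  have : Fact (1 ≤ ENNReal.ofReal p) := ⟨ENNReal.one_le_ofReal.mpr hp⟩
  rw [setOf_rademacherNorm_le_eq_preimage]
  exact Metric.isClosed_closedBall.preimage (rademacherMap p N).continuous

theorem convex_setOf_rademacherNorm_le {p : ℝ} (hp : 1 ≤ p) (M : ℝ) :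
    Convex ℝ {y : Fin N → E | rademacherNorm p y ≤ M} := by
  have : Fact (1 ≤ ENNReal.ofReal p) := ⟨ENNReal.one_le_ofReal.mpr hp⟩
  rw [setOf_rademacherNorm_le_eq_preimage]
  exact (convex_closedBall _ M).linear_preimage (rademacherMap (E := E) p N).toLinearMap

end RademacherNorm

theorem apply_mem_closedConvexHull_of_mem_strongClosureConvexHull {X Y : Type*}
    [NormedAddCommGroup X] [NormedSpace ℂ X] [NormedAddCommGroup Y] [NormedSpace ℂ Y]
    {𝒯 : Set (X →L[ℂ] Y)} {S : X →L[ℂ] Y} (hS : S ∈ StrongClosureConvexHull 𝒯) (x : X) :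
    S x ∈ closedConvexHull ℝ ((fun T : X →L[ℂ] Y => T x) '' 𝒯) := by
  rw [closedConvexHull_eq_closure_convexHull, Metric.mem_closure_iff]
  intro δ hδ
  obtain ⟨n, T, l, hT, hl, hl1, hclose⟩ := hS 1 (fun _ => x) δ hδ
  refine ⟨∑ k, l k • T k x, ?_, by simpa [dist_eq_norm] using hclose 0⟩
  exact (convex_convexHull ℝ _).sum_mem (fun k _ => (hl k).1) hl1
    fun k _ => subset_convexHull ℝ _ ⟨T k, hT k, rfl⟩

theorem isRpBoundedWith_strongClosure_convexHull_general
    {X Y : Type*} [NormedAddCommGroup X] [NormedSpace ℂ X]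
    [NormedAddCommGroup Y] [NormedSpace ℂ Y]
    (p : ℝ) (hp : 1 ≤ p) (𝒯 : Set (X →L[ℂ] Y)) (C : ℝ)
    (h : IsRpBoundedWith p 𝒯 C) :
    IsRpBoundedWith p (StrongClosureConvexHull 𝒯) C := by
  intro N S hS x
  let orbits : Fin N → Set Y := fun j => (fun T : X →L[ℂ] Y => T (x j)) '' 𝒯
  have h_orbits : univ.pi orbits ⊆ {y | rademacherNorm p y ≤ C * rademacherNorm p x} := by
    intro y hy
    choose T hT hTy using fun j => hy j (mem_univ j)
    obtain rfl : (fun j => T j (x j)) = y := funext hTy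
    exact h N T hT x
  have hS_orbits : (fun j => S j (x j)) ∈ closedConvexHull ℝ (univ.pi orbits) := by
    rw [closedConvexHull_pi]
    exact fun j _ => apply_mem_closedConvexHull_of_mem_strongClosureConvexHull (hS j) (x j)
  exact closedConvexHull_min h_orbits (convex_setOf_rademacherNorm_le hp _)
    (isClosed_setOf_rademacherNorm_le hp _) hS_orbits

/-- The strong-operator closure of the convex hull of an `R_p`-bounded family
is `R_p`-bounded with the same bound. -/
theorem isRpBoundedWith_strongClosure_convexHull
    {X Y : Type*} [NormedAddCommGroup X] [NormedSpace ℂ X] [CompleteSpace X]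
    [NormedAddCommGroup Y] [NormedSpace ℂ Y] [CompleteSpace Y]
    (p : ℝ) (hp : 1 ≤ p) (𝒯 : Set (X →L[ℂ] Y)) (C : ℝ)
    (h : IsRpBoundedWith p 𝒯 C) :
    IsRpBoundedWith p (StrongClosureConvexHull 𝒯) C :=
  isRpBoundedWith_strongClosure_convexHull_general p hp 𝒯 C h
end

section
/- Let X and Y be complex Banach spaces, p ∈ [1,∞), let G ⊆ ℂ be open, K ⊆ G compact, and let H : G → L(X,Y) be holomorphic (complex differentiable at every point of G). Then the family H(K) = {H(z) : z ∈ K} of bounded linear operators from X to Y is R_p-bounded. -/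
open scoped BigOperators

/-!
Near a point `c`, `H(z) = ∑ₙ (z - c)ⁿ aₙ` with `∑ₙ ‖aₙ‖ rⁿ < ∞` on a closed ball of radius `r`.
By Kahane's contraction principle, multiplying the `xⱼ` by scalars of modulus at most `rⁿ` changes
the Rademacher average by a factor at most `2 rⁿ` (the `2` comes from splitting into real and
imaginary parts), so `H` maps the ball onto an R-bounded family with bound `2 ∑ₙ ‖aₙ‖ rⁿ`.
R-bounds add up over finite unions, and `K` is covered by finitely many such balls.
-/

open scoped ENNReal NNReal Topology
open Metric Set

namespace PiLp

theorem norm_le_norm_of_forall_norm_le {q : ℝ≥0∞} [Fact (1 ≤ q)] {ι : Type*} [Fintype ι]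
    {β γ : ι → Type*} [∀ i, SeminormedAddCommGroup (β i)] [∀ i, SeminormedAddCommGroup (γ i)]
    {f : PiLp q β} {g : PiLp q γ} (h : ∀ i, ‖f i‖ ≤ ‖g i‖) : ‖f‖ ≤ ‖g‖ := by
  rcases eq_or_ne q ∞ with rfl | hq
  · rw [norm_eq_ciSup, norm_eq_ciSup]
    exact ciSup_mono (Finite.bddAbove_range _) h
  · have hq₀ : 0 < q.toReal := ENNReal.toReal_pos (zero_lt_one.trans_le Fact.out).ne' hq
    rw [norm_eq_sum hq₀, norm_eq_sum hq₀]
    gcongr with i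
    exact h i

end PiLp

section Rademacher

variable {E : Type*} {N : ℕ}

/-- The Rademacher sums `ε ↦ ∑ⱼ ±xⱼ`, indexed by the sign patterns `ε`, as a vector of `ℓ^q`. For
finite `q` its norm is `(∑_ε ‖∑ⱼ ±xⱼ‖^q)^(1/q)`, the quantity bounded in `IsRpBoundedWith`. -/
def rademacherSum (q : ℝ≥0∞) [AddCommGroup E] :
    (Fin N → E) →+ PiLp q (fun _ : Fin N → Bool => E) where
  toFun x := WithLp.toLp q fun ε => ∑ j, if ε j then x j else -x j
  map_zero' := by simp only [Pi.zero_apply, neg_zero, ite_self, Finset.sum_const_zero]; rfl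
  map_add' x y := by
    rw [← WithLp.toLp_add]
    congr 1
    funext ε
    simp only [Pi.add_apply, ← Finset.sum_add_distrib]
    refine Finset.sum_congr rfl fun j _ => ?_
    split_ifs <;> abel

variable {q : ℝ≥0∞}

section AddCommGroup

variable [AddCommGroup E]

@[simp]
theorem rademacherSum_apply (x : Fin N → E) (ε : Fin N → Bool) :
    rademacherSum q x ε = ∑ j, if ε j then x j else -x j := rfl

theorem rademacherSum_smul {R : Type*} [Semiring R] [Module R E] (c : R) (x : Fin N → E) :
    rademacherSum q (c • x) = c • rademacherSum q x := by
  ext ε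
  simp [Finset.smul_sum, apply_ite]

end AddCommGroup

section Seminormed

variable [SeminormedAddCommGroup E]

theorem continuous_rademacherSum :
    Continuous (rademacherSum q : (Fin N → E) → PiLp q fun _ : Fin N → Bool => E) :=
  (PiLp.continuous_toLp q _).comp <| continuous_pi fun _ => continuous_finsetSum _ fun j _ =>
    continuous_if_const _ (fun _ => continuous_apply j) fun _ => (continuous_apply j).neg

variable [Fact (1 ≤ q)] [NormedSpace ℝ E]

/-- Flipping the signs `εⱼ` at the positions where `δⱼ = -r` permutes the sign patterns. -/
theorem norm_rademacherSum_smul_of_mem_pair {r : ℝ} {δ : Fin N → ℝ}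
    (hδ : ∀ j, δ j ∈ ({-r, r} : Set ℝ)) (x : Fin N → E) :
    ‖rademacherSum q (δ • x)‖ = ‖rademacherSum q (r • x)‖ := by
  classical
  let e : Equiv.Perm (Fin N → Bool) :=
    Function.Involutive.toPerm (fun ε j => if δ j = r then ε j else !ε j) fun ε => by
      ext j; by_cases h : δ j = r <;> simp [h]
  suffices rademacherSum q (δ • x) =
      LinearIsometryEquiv.piLpCongrLeft q ℝ E e.symm (rademacherSum q (r • x)) by
    rw [this, LinearIsometryEquiv.norm_map]
  ext ε
  change rademacherSum q (δ • x) ε = rademacherSum q (r • x) fun j => if δ j = r then ε j else !ε j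
  simp only [rademacherSum_apply, Pi.smul_apply']
  refine Finset.sum_congr rfl fun j _ => ?_
  by_cases hr : δ j = r
  · simp [hr]
  · have h : δ j = -r := by simpa [hr] using hδ j
    rw [if_neg hr, h]
    cases ε j <;> simp

/-- Kahane's contraction principle. The left side is a convex function of `lam`, so on the cube
`‖lam‖ ≤ r` it is largest at a vertex, a vector of entries `±r`. -/
theorem norm_rademacherSum_smul_le (lam : Fin N → ℝ) (x : Fin N → E) :
    ‖rademacherSum q (lam • x)‖ ≤ ‖lam‖ * ‖rademacherSum q x‖ := by
  set r := ‖lam‖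
  have hconv : ConvexOn ℝ univ fun μ : Fin N → ℝ => ‖rademacherSum q (μ • x)‖ := by
    refine ⟨convex_univ, fun μ _ ν _ a b ha hb _ => ?_⟩
    simp only [add_smul, smul_assoc, map_add, rademacherSum_smul, smul_eq_mul]
    refine (norm_add_le _ _).trans ?_
    rw [norm_smul, norm_smul, Real.norm_of_nonneg ha, Real.norm_of_nonneg hb]
  have hcube : lam ∈ convexHull ℝ (univ.pi fun _ => ({-r, r} : Set ℝ)) := by
    rw [convexHull_pi]
    intro j _
    rw [convexHull_pair, segment_eq_Icc (neg_le_self (norm_nonneg lam))]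
    exact abs_le.1 (norm_le_pi_norm lam j)
  obtain ⟨δ, hδ, hle⟩ := hconv.exists_ge_of_mem_convexHull (subset_univ _) hcube
  calc ‖rademacherSum q (lam • x)‖ ≤ ‖rademacherSum q (δ • x)‖ := hle
    _ = ‖rademacherSum q (r • x)‖ := norm_rademacherSum_smul_of_mem_pair (fun j => hδ j trivial) x
    _ = r * ‖rademacherSum q x‖ := by
      rw [rademacherSum_smul, norm_smul, Real.norm_of_nonneg (norm_nonneg lam)]

end Seminormed

section Complex

variable [SeminormedAddCommGroup E] [NormedSpace ℂ E] [Fact (1 ≤ q)]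

theorem norm_rademacherSum_smul_le_two_mul (c : Fin N → ℂ) (x : Fin N → E) :
    ‖rademacherSum q (c • x)‖ ≤ 2 * ‖c‖ * ‖rademacherSum q x‖ := by
  have hsplit : c • x = (fun j => (c j).re) • x + (fun j => (c j).im) • (Complex.I • x) := by
    ext j
    simp only [Pi.smul_apply', Pi.add_apply, Pi.smul_apply]
    conv_lhs => rw [← Complex.re_add_im (c j)]
    rw [add_smul, mul_smul, Complex.coe_smul, Complex.coe_smul]
  have hre : ‖fun j => (c j).re‖ ≤ ‖c‖ := (pi_norm_le_iff_of_nonneg (norm_nonneg c)).2 fun j =>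
    (Complex.abs_re_le_norm _).trans (norm_le_pi_norm c j)
  have him : ‖fun j => (c j).im‖ ≤ ‖c‖ := (pi_norm_le_iff_of_nonneg (norm_nonneg c)).2 fun j =>
    (Complex.abs_im_le_norm _).trans (norm_le_pi_norm c j)
  have hI : ‖rademacherSum q (Complex.I • x)‖ = ‖rademacherSum q x‖ := by
    rw [rademacherSum_smul, norm_smul, Complex.norm_I, one_mul]
  calc ‖rademacherSum q (c • x)‖
      ≤ ‖rademacherSum q ((fun j => (c j).re) • x)‖
        + ‖rademacherSum q ((fun j => (c j).im) • (Complex.I • x))‖ := by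
        rw [hsplit, map_add]; exact norm_add_le _ _
    _ ≤ ‖c‖ * ‖rademacherSum q x‖ + ‖c‖ * ‖rademacherSum q (Complex.I • x)‖ :=
        add_le_add ((norm_rademacherSum_smul_le _ _).trans (by gcongr))
          ((norm_rademacherSum_smul_le _ _).trans (by gcongr))
    _ = 2 * ‖c‖ * ‖rademacherSum q x‖ := by rw [hI]; ring

end Complex

end Rademacher

section RBounded

variable {N : ℕ} {X Y : Type*} [NormedAddCommGroup X] [NormedSpace ℂ X]
  [NormedAddCommGroup Y] [NormedSpace ℂ Y]

def IsRBoundedWith (q : ℝ≥0∞) (𝒯 : Set (X →L[ℂ] Y)) (C : ℝ) : Prop :=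
  ∀ (N : ℕ) (T : Fin N → X →L[ℂ] Y), (∀ j, T j ∈ 𝒯) → ∀ x : Fin N → X,
    ‖rademacherSum q fun j => T j (x j)‖ ≤ C * ‖rademacherSum q x‖

variable {q : ℝ≥0∞}

theorem IsRBoundedWith.isRpBoundedWith {p : ℝ} (hp : 0 < p) {𝒯 : Set (X →L[ℂ] Y)} {C : ℝ}
    (h : IsRBoundedWith (ENNReal.ofReal p) 𝒯 C) : IsRpBoundedWith p 𝒯 C := by
  intro N T hT x
  have hp' : 0 < (ENNReal.ofReal p).toReal := by rwa [ENNReal.toReal_ofReal hp.le]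
  simpa [PiLp.norm_eq_sum hp', ENNReal.toReal_ofReal hp.le] using h N T hT x

theorem IsRBoundedWith.mono {𝒮 𝒯 : Set (X →L[ℂ] Y)} {C : ℝ} (h : IsRBoundedWith q 𝒯 C)
    (h𝒮 : 𝒮 ⊆ 𝒯) : IsRBoundedWith q 𝒮 C :=
  fun N T hT => h N T fun j => h𝒮 (hT j)

variable [Fact (1 ≤ q)]

theorem norm_rademacherSum_map_le (T : X →L[ℂ] Y) (x : Fin N → X) :
    ‖rademacherSum q fun j => T (x j)‖ ≤ ‖T‖ * ‖rademacherSum q x‖ := by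
  rw [← Real.norm_of_nonneg (norm_nonneg T), ← norm_smul]
  refine PiLp.norm_le_norm_of_forall_norm_le fun ε => ?_
  have hT : rademacherSum q (fun j => T (x j)) ε = T (rademacherSum q x ε) := by
    simp [map_sum, apply_ite]
  rw [hT, PiLp.smul_apply, norm_smul, Real.norm_of_nonneg (norm_nonneg T)]
  exact T.le_opNorm _

theorem IsRBoundedWith.biUnion {ι : Type*} {s : Finset ι} {𝒮 : ι → Set (X →L[ℂ] Y)} {C : ι → ℝ}
    (h : ∀ i ∈ s, IsRBoundedWith q (𝒮 i) (C i)) (hC : ∀ i ∈ s, 0 ≤ C i)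
    (hne : ∀ i ∈ s, (𝒮 i).Nonempty) :
    IsRBoundedWith q (⋃ i ∈ s, 𝒮 i) (∑ i ∈ s, C i) := by
  classical
  intro N T hT x
  simp only [mem_iUnion] at hT
  -- Sort the indices by a set `𝒮 (g j)` containing `T j`. The `i`-th piece keeps the `xⱼ` with
  -- `g j = i`; elsewhere some `S i ∈ 𝒮 i` acts on `0`.
  choose g hgs hgT using hT
  choose! S hS using hne
  let w (i : ι) : Fin N → ℝ := fun j => if g j = i then 1 else 0
  let T' (i : ι) (j : Fin N) : X →L[ℂ] Y := if g j = i then T j else S i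
  have hT' : ∀ i ∈ s, ∀ j, T' i j ∈ 𝒮 i := by
    intro i hi j
    by_cases hj : g j = i
    · simpa [T', hj] using hgT j
    · simpa [T', hj] using hS i hi
  have hw : ∀ i, ‖w i‖ ≤ 1 := fun i => (pi_norm_le_iff_of_nonneg zero_le_one).2 fun j => by
    by_cases hj : g j = i <;> simp [w, hj]
  have hdecomp : (fun j => T j (x j)) = ∑ i ∈ s, fun j => T' i j ((w i • x) j) := by
    ext j
    rw [Finset.sum_apply, Finset.sum_eq_single_of_mem (g j) (hgs j)]
    · simp [T', w]
    · intro i _ hi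
      simp [T', w, Ne.symm hi]
  calc ‖rademacherSum q fun j => T j (x j)‖
      ≤ ∑ i ∈ s, ‖rademacherSum q fun j => T' i j ((w i • x) j)‖ := by
        rw [hdecomp, map_sum]; exact norm_sum_le _ _
    _ ≤ ∑ i ∈ s, C i * ‖rademacherSum q x‖ := by
        refine Finset.sum_le_sum fun i hi => (h i hi N (T' i) (hT' i hi) _).trans ?_
        gcongr
        · exact hC i hi
        · exact (norm_rademacherSum_smul_le _ _).trans
            (mul_le_of_le_one_left (norm_nonneg _) (hw i))
    _ = (∑ i ∈ s, C i) * ‖rademacherSum q x‖ := (Finset.sum_mul _ _ _).symm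

theorem IsCompact.exists_isRBoundedWith_image {α : Type*} [TopologicalSpace α] {K : Set α}
    (hK : IsCompact K) {H : α → X →L[ℂ] Y}
    (hloc : ∀ w ∈ K, ∃ U ∈ 𝓝 w, ∃ C, 0 ≤ C ∧ IsRBoundedWith q (H '' U) C) :
    ∃ C, IsRBoundedWith q (H '' K) C := by
  choose! U hU C hC hUC using hloc
  obtain ⟨t, htK, hKt⟩ := hK.elim_nhds_subcover U hU
  refine ⟨∑ w ∈ t, C w, (IsRBoundedWith.biUnion (fun w hw => hUC w (htK w hw))
    (fun w hw => hC w (htK w hw))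
    (fun w hw => ⟨H w, w, mem_of_mem_nhds (hU w (htK w hw)), rfl⟩)).mono ?_⟩
  rw [← image_iUnion₂]
  exact image_mono hKt

theorem HasFPowerSeriesOnBall.isRBoundedWith_image_closedBall {H : ℂ → X →L[ℂ] Y}
    {P : FormalMultilinearSeries ℂ ℂ (X →L[ℂ] Y)} {c : ℂ} {R : ℝ≥0∞}
    (hH : HasFPowerSeriesOnBall H P c R) {r : ℝ≥0} (hr : (r : ℝ≥0∞) < R) :
    IsRBoundedWith q (H '' closedBall c r) (2 * ∑' n, ‖P n‖ * r ^ n) := by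
  intro N T hT x
  choose z hz hzT using hT
  obtain rfl : T = fun j => H (z j) := funext fun j => (hzT j).symm
  have hsum : ∀ j, HasSum (fun n => P.coeff n ((z j - c) ^ n • x j)) (H (z j) (x j)) := by
    intro j
    have hmem : z j ∈ eball c R := by
      rw [← closedEBall_coe] at hz
      exact mem_eball.2 ((hz j).trans_lt hr)
    have := (hH.hasSum_sub hmem).mapL (ContinuousLinearMap.apply ℂ Y (x j))
    simpa [P.apply_eq_pow_smul_coeff] using this
  have hR : HasSum (fun n => rademacherSum q fun j => P.coeff n ((z j - c) ^ n • x j))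
      (rademacherSum q fun j => H (z j) (x j)) :=
    (Pi.hasSum.2 hsum).map (rademacherSum q) continuous_rademacherSum
  have hP : HasSum (fun n => 2 * (‖P n‖ * r ^ n) * ‖rademacherSum q x‖)
      (2 * (∑' n, ‖P n‖ * r ^ n) * ‖rademacherSum q x‖) :=
    ((P.summable_norm_mul_pow (hr.trans_le hH.r_le)).hasSum.mul_left 2).mul_right _
  refine hR.norm_le_of_bounded hP fun n => ?_
  have hpow : ‖fun j => (z j - c) ^ n‖ ≤ (r : ℝ) ^ n :=
    (pi_norm_le_iff_of_nonneg (by positivity)).2 fun j => by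
      rw [norm_pow, ← dist_eq_norm]
      exact pow_le_pow_left₀ dist_nonneg (hz j) n
  calc ‖rademacherSum q fun j => P.coeff n ((z j - c) ^ n • x j)‖
      ≤ ‖P.coeff n‖ * ‖rademacherSum q ((fun j => (z j - c) ^ n) • x)‖ :=
        norm_rademacherSum_map_le _ _
    _ ≤ ‖P n‖ * (2 * r ^ n * ‖rademacherSum q x‖) := by
        rw [← P.norm_apply_eq_norm_coef]
        gcongr
        exact (norm_rademacherSum_smul_le_two_mul _ _).trans (by gcongr)
    _ = 2 * (‖P n‖ * r ^ n) * ‖rademacherSum q x‖ := by ring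

theorem AnalyticAt.exists_isRBoundedWith_image_nhds {H : ℂ → X →L[ℂ] Y} {w : ℂ}
    (hH : AnalyticAt ℂ H w) : ∃ U ∈ 𝓝 w, ∃ C, 0 ≤ C ∧ IsRBoundedWith q (H '' U) C := by
  obtain ⟨P, R, hP⟩ := hH
  obtain ⟨r, hr₀, hrR⟩ := ENNReal.lt_iff_exists_nnreal_btwn.1 hP.r_pos
  exact ⟨closedBall w r, closedBall_mem_nhds w (by exact_mod_cast hr₀), _,
    mul_nonneg zero_le_two (tsum_nonneg fun n => by positivity),
    hP.isRBoundedWith_image_closedBall hrR⟩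

end RBounded

theorem rpBounded_of_holomorphic_on_compact_general
    {X Y : Type*} [NormedAddCommGroup X] [NormedSpace ℂ X]
    [NormedAddCommGroup Y] [NormedSpace ℂ Y] [CompleteSpace Y]
    (p : ℝ) (hp : 1 ≤ p) (G : Set ℂ) (hG : IsOpen G) (K : Set ℂ)
    (hK : IsCompact K) (hKG : K ⊆ G)
    (H : ℂ → (X →L[ℂ] Y)) (hol : DifferentiableOn ℂ H G) :
    ∃ C : ℝ, IsRpBoundedWith p (H '' K) C := by
  have : Fact (1 ≤ ENNReal.ofReal p) := ⟨ENNReal.one_le_ofReal.2 hp⟩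
  obtain ⟨C, hC⟩ := hK.exists_isRBoundedWith_image (q := ENNReal.ofReal p) fun w hw =>
    (hol.analyticAt (hG.mem_nhds (hKG hw))).exists_isRBoundedWith_image_nhds
  exact ⟨C, hC.isRpBoundedWith (by linarith)⟩

/-- If `H : G → L(X,Y)` is holomorphic on an open set `G ⊆ ℂ` and `K ⊆ G` is
compact, then the family `H(K)` is `R_p`-bounded. -/
theorem rpBounded_of_holomorphic_on_compact
    {X Y : Type*} [NormedAddCommGroup X] [NormedSpace ℂ X] [CompleteSpace X]
    [NormedAddCommGroup Y] [NormedSpace ℂ Y] [CompleteSpace Y]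
    (p : ℝ) (hp : 1 ≤ p) (G : Set ℂ) (hG : IsOpen G) (K : Set ℂ)
    (hK : IsCompact K) (hKG : K ⊆ G)
    (H : ℂ → (X →L[ℂ] Y)) (hol : DifferentiableOn ℂ H G) :
    ∃ C : ℝ, IsRpBoundedWith p (H '' K) C :=
  rpBounded_of_holomorphic_on_compact_general p hp G hG K hK hKG H hol
end

section
/- Let X be a complex Banach space, p ∈ [1,∞), θ ∈ (0,π], let D ⊆ X be a dense linear subspace and A : D → X a linear operator. Assume that Σ_θ ⊆ ρ(A), that the family {λ(λ−A)^{−1} : λ ∈ Σ_θ} is R_p-bounded with bound R_θ(A), and that the family {A(λ−A)^{−1} : λ ∈ Σ_θ} is R_p-bounded with bound R̃_θ(A). Let B be a linear operator in X whose domain contains D and which satisfies ‖Bx‖ ≤ a‖Ax‖ for all x ∈ D, where 0 ≤ a < 1/R̃_θ(A). Then the operator A + B with domain D satisfies Σ_θ ⊆ ρ(A+B), and the family {λ(λ−(A+B))^{−1} : λ ∈ Σ_θ} is R_p-bounded with bound at most R_θ(A)/(1 − a·R̃_θ(A)). In particular A + B is R-sectorial with angle at least θ. -/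
open scoped BigOperators

/-- The open sector `Σ_φ = {z ∈ ℂ \ {0} : |arg z| < φ}`. -/
def Sector (φ : ℝ) : Set ℂ := {z : ℂ | z ≠ 0 ∧ |Complex.arg z| < φ}

/-!
Write `R(λ) = (λ - A)⁻¹` and `S(λ) = B R(λ)`. On `D` we have `λ - A - B = (1 - S(λ))(λ - A)`, so
`R(λ)(1 - S(λ))⁻¹` is the resolvent of `A + B` as soon as `‖S(λ)‖ < 1`. Since `‖B y‖ ≤ a ‖A y‖` and
`A R(λ) = λ R(λ) - 1`, the family `{S(λ)}` is `R_p`-bounded by `a R̃θ(A) < 1`. Powers and products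
of `R_p`-bounded families are `R_p`-bounded by the products of the bounds, so the Neumann series
`(1 - S(λ))⁻¹ = ∑ S(λ)ⁿ` is `R_p`-bounded by `(1 - a R̃θ(A))⁻¹`, and composing with `{λ R(λ)}` gives
the bound `Rθ(A) / (1 - a R̃θ(A))`.
-/

namespace PiLp

variable {p : ENNReal} {ι : Type*} [Fintype ι] {β γ : ι → Type*}
  [∀ i, SeminormedAddCommGroup (β i)] [∀ i, SeminormedAddCommGroup (γ i)]

theorem norm_le_mul_norm_of_forall_le (hp : 0 < p.toReal) {f : PiLp p β} {g : PiLp p γ}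
    {c : ℝ} (hc : 0 ≤ c) (h : ∀ i, ‖f i‖ ≤ c * ‖g i‖) : ‖f‖ ≤ c * ‖g‖ := by
  have hsum : ∑ i, ‖f i‖ ^ p.toReal ≤ c ^ p.toReal * ∑ i, ‖g i‖ ^ p.toReal := by
    rw [Finset.mul_sum]
    refine Finset.sum_le_sum fun i _ => ?_
    rw [← Real.mul_rpow hc (norm_nonneg _)]
    exact Real.rpow_le_rpow (norm_nonneg _) (h i) hp.le
  calc ‖f‖ ≤ (c ^ p.toReal * ∑ i, ‖g i‖ ^ p.toReal) ^ (1 / p.toReal) := by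
        rw [norm_eq_sum hp]
        gcongr
    _ = c * ‖g‖ := by
        rw [norm_eq_sum hp, Real.mul_rpow (by positivity) (by positivity), ← Real.rpow_mul hc,
          mul_one_div_cancel hp.ne', Real.rpow_one]

end PiLp

section SignedSums

/- The `R_p`-expression of a tuple is the `ℓ^p`-norm of its vector of signed sums, indexed by
sign patterns. Seen this way it is a continuous seminorm, which gives the triangle inequality and
the passage to the limit in Neumann series for free. -/

variable {X : Type*} [NormedAddCommGroup X] [NormedSpace ℂ X]

noncomputable def signedSums (p : ℝ) (N : ℕ) :
    (Fin N → X) →L[ℂ] PiLp (ENNReal.ofReal p) (fun _ : Fin N → Bool => X) where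
  toFun x := WithLp.toLp _ fun ε => ∑ j, if ε j then x j else -x j
  map_add' x y := by
    ext ε
    simp only [Pi.add_apply, PiLp.add_apply, ← Finset.sum_add_distrib]
    refine Finset.sum_congr rfl fun j _ => ?_
    split_ifs <;> abel
  map_smul' c x := by
    ext ε
    simp only [Pi.smul_apply, PiLp.smul_apply, Finset.smul_sum, RingHom.id_apply]
    refine Finset.sum_congr rfl fun j _ => ?_
    split_ifs <;> simp
  cont := (PiLp.continuous_toLp _ _).comp <| continuous_pi fun ε =>
    continuous_finsetSum _ fun j _ => by split_ifs <;> fun_prop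

theorem signedSums_apply (p : ℝ) {N : ℕ} (x : Fin N → X) (ε : Fin N → Bool) :
    signedSums p N x ε = ∑ j, if ε j then x j else -x j := rfl

theorem norm_signedSums {p : ℝ} (hp : 0 < p) {N : ℕ} (x : Fin N → X) :
    ‖signedSums p N x‖ = (∑ ε : Fin N → Bool, ‖∑ j, if ε j then x j else -x j‖ ^ p) ^ (1 / p) := by
  rw [PiLp.norm_eq_sum (by rwa [ENNReal.toReal_ofReal hp.le]), ENNReal.toReal_ofReal hp.le]
  rfl

theorem norm_signedSums_fin_one {p : ℝ} (hp : 0 < p) (v : X) :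
    ‖signedSums p 1 (fun _ => v)‖ = 2 ^ (1 / p) * ‖v‖ := by
  have hterm : ∀ ε : Fin 1 → Bool, ‖∑ j, if ε j then v else -v‖ ^ p = ‖v‖ ^ p := fun ε => by
    cases h : ε 0 <;> simp [h]
  rw [norm_signedSums hp, Finset.sum_congr rfl fun ε _ => hterm ε]
  simp only [Finset.sum_const, Finset.card_univ, Fintype.card_fun, Fintype.card_bool,
    Fintype.card_fin, pow_one, nsmul_eq_mul, Nat.cast_ofNat]
  rw [Real.mul_rpow zero_le_two (by positivity), ← Real.rpow_mul (norm_nonneg v),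
    mul_one_div_cancel hp.ne', Real.rpow_one]

end SignedSums

theorem isRpBoundedWith_iff {p : ℝ} (hp : 0 < p) {X Y : Type*} [NormedAddCommGroup X]
    [NormedSpace ℂ X] [NormedAddCommGroup Y] [NormedSpace ℂ Y] {𝒯 : Set (X →L[ℂ] Y)} {C : ℝ} :
    IsRpBoundedWith p 𝒯 C ↔ ∀ (N : ℕ) (T : Fin N → X →L[ℂ] Y), (∀ j, T j ∈ 𝒯) → ∀ x : Fin N → X,
      ‖signedSums p N (fun j => T j (x j))‖ ≤ C * ‖signedSums p N x‖ := by
  simp only [norm_signedSums hp]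
  rfl

namespace IsRpBoundedWith

variable {p : ℝ} {X Y Z : Type*} [NormedAddCommGroup X] [NormedSpace ℂ X]
  [NormedAddCommGroup Y] [NormedSpace ℂ Y] [NormedAddCommGroup Z] [NormedSpace ℂ Z]
  {𝒯 : Set (X →L[ℂ] Y)} {C : ℝ}

theorem mono {𝒮 : Set (X →L[ℂ] Y)} (h : IsRpBoundedWith p 𝒯 C) (h𝒮 : 𝒮 ⊆ 𝒯) :
    IsRpBoundedWith p 𝒮 C :=
  fun N T hT => h N T fun j => h𝒮 (hT j)

theorem of_subsingleton [Subsingleton X] (hp : 0 < p) : IsRpBoundedWith p 𝒯 C := by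
  intro N T _ x
  simp [Subsingleton.elim (x _) 0, Real.zero_rpow hp.ne', Real.zero_rpow (inv_pos.2 hp).ne']

theorem norm_apply_le (hp : 0 < p) (h : IsRpBoundedWith p 𝒯 C) {T : X →L[ℂ] Y} (hT : T ∈ 𝒯)
    (x : X) : ‖T x‖ ≤ C * ‖x‖ := by
  have key := (isRpBoundedWith_iff hp).1 h 1 (fun _ => T) (fun _ => hT) (fun _ => x)
  rw [norm_signedSums_fin_one hp, norm_signedSums_fin_one hp, mul_left_comm] at key
  exact le_of_mul_le_mul_left key (by positivity)

theorem opNorm_le (hp : 0 < p) (h : IsRpBoundedWith p 𝒯 C) (hC : 0 ≤ C) {T : X →L[ℂ] Y}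
    (hT : T ∈ 𝒯) : ‖T‖ ≤ C :=
  T.opNorm_le_bound hC (h.norm_apply_le hp hT)

theorem nonneg [Nontrivial X] (hp : 0 < p) (h : IsRpBoundedWith p 𝒯 C) {T : X →L[ℂ] Y}
    (hT : T ∈ 𝒯) : 0 ≤ C := by
  obtain ⟨x, hx⟩ := exists_ne (0 : X)
  exact nonneg_of_mul_nonneg_left ((norm_nonneg _).trans (h.norm_apply_le hp hT x))
    (norm_pos_iff.2 hx)

theorem image2_comp {𝒰 : Set (X →L[ℂ] Y)} {𝒱 : Set (Y →L[ℂ] Z)} {C' : ℝ}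
    (h𝒱 : IsRpBoundedWith p 𝒱 C) (h𝒰 : IsRpBoundedWith p 𝒰 C') (hC : 0 ≤ C) :
    IsRpBoundedWith p (Set.image2 (fun V U => V ∘L U) 𝒱 𝒰) (C * C') := by
  intro N W hW x
  choose V hV U hU hVU using hW
  obtain rfl : W = fun j => V j ∘L U j := funext fun j => (hVU j).symm
  exact ((h𝒱 N V hV _).trans (mul_le_mul_of_nonneg_left (h𝒰 N U hU x) hC)).trans_eq
    (mul_assoc _ _ _).symm

theorem image_pow {𝒮 : Set (X →L[ℂ] X)} {r : ℝ} (h : IsRpBoundedWith p 𝒮 r) (hr : 0 ≤ r) (n : ℕ) :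
    IsRpBoundedWith p ((· ^ n) '' 𝒮) (r ^ n) := by
  induction n with
  | zero =>
    intro N T hT x
    obtain rfl : T = fun _ => 1 := funext fun j => by
      obtain ⟨S, -, hS⟩ := hT j
      simpa using hS.symm
    simp
  | succ n ih =>
    rw [pow_succ]
    refine (ih.image2_comp h (pow_nonneg hr n)).mono ?_
    rintro _ ⟨S, hS, rfl⟩
    exact ⟨S ^ n, ⟨S, hS, rfl⟩, S, hS, (pow_succ S n).symm⟩

theorem image_tsum_pow [CompleteSpace X] {𝒮 : Set (X →L[ℂ] X)} {r : ℝ} (hp : 1 ≤ p)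
    (h : IsRpBoundedWith p 𝒮 r) (hr₀ : 0 ≤ r) (hr₁ : r < 1) :
    IsRpBoundedWith p ((fun S => ∑' n, S ^ n) '' 𝒮) (1 - r)⁻¹ := by
  have hp₀ : 0 < p := zero_lt_one.trans_le hp
  have : Fact (1 ≤ ENNReal.ofReal p) := ⟨ENNReal.one_le_ofReal.2 hp⟩
  rw [isRpBoundedWith_iff hp₀]
  intro N T hT x
  choose S hS hST using hT
  have hS₁ : ∀ j, ‖S j‖ < 1 := fun j => (h.opNorm_le hp₀ hr₀ (hS j)).trans_lt hr₁
  have hsum : HasSum (fun n j => (S j ^ n) (x j)) (fun j => T j (x j)) := by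
    refine Pi.hasSum.2 fun j => ?_
    rw [← hST j]
    exact (summable_geometric_of_norm_lt_one (hS₁ j)).hasSum.mapL
      (ContinuousLinearMap.apply ℂ X (x j))
  refine (hsum.mapL (signedSums p N)).norm_le_of_bounded
    ((hasSum_geometric_of_lt_one hr₀ hr₁).mul_right _) fun n => ?_
  exact (isRpBoundedWith_iff hp₀).1 (h.image_pow hr₀ n) N _ (fun j => ⟨S j, hS j, rfl⟩) x

theorem of_comp_le {E : Type*} [AddCommGroup E] [Module ℂ E] {𝒰 : Set (X →L[ℂ] Z)}
    {A : E →ₗ[ℂ] Z} {B : E →ₗ[ℂ] Y} {a : ℝ} (hp : 0 < p) (ha : 0 ≤ a)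
    (hB : ∀ e, ‖B e‖ ≤ a * ‖A e‖) (h : IsRpBoundedWith p 𝒰 C)
    (h𝒯 : ∀ S ∈ 𝒯, ∃ R : X →ₗ[ℂ] E, ⇑S = B ∘ R ∧ ∃ T ∈ 𝒰, ⇑T = A ∘ R) :
    IsRpBoundedWith p 𝒯 (a * C) := by
  rw [isRpBoundedWith_iff hp] at h ⊢
  intro N S hS x
  choose R hSR T hT hTR using fun j => h𝒯 (S j) (hS j)
  calc ‖signedSums p N fun j => S j (x j)‖ ≤ a * ‖signedSums p N fun j => T j (x j)‖ :=
        PiLp.norm_le_mul_norm_of_forall_le (by rwa [ENNReal.toReal_ofReal hp.le]) ha fun ε => by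
          simp only [signedSums_apply, hSR, hTR, Function.comp_apply, ← map_neg, ← apply_ite B,
            ← apply_ite A, ← map_sum]
          exact hB _
    _ ≤ a * (C * ‖signedSums p N x‖) := mul_le_mul_of_nonneg_left (h N T hT x) ha
    _ = a * C * ‖signedSums p N x‖ := (mul_assoc _ _ _).symm

end IsRpBoundedWith

structure IsResolvent {X : Type*} [NormedAddCommGroup X] [NormedSpace ℂ X] {D : Submodule ℂ X}
    (A : D →ₗ[ℂ] X) (lam : ℂ) (R : X →L[ℂ] X) : Prop where
  mem : ∀ x, R x ∈ D
  right_inv : ∀ x, lam • R x - A ⟨R x, mem x⟩ = x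
  left_inv : ∀ d : D, R (lam • (d : X) - A d) = d

namespace IsResolvent

variable {X : Type*} [NormedAddCommGroup X] [NormedSpace ℂ X] {D : Submodule ℂ X}
  {A B : D →ₗ[ℂ] X} {lam : ℂ} {R : X →L[ℂ] X}

def toDomain (h : IsResolvent A lam R) : X →ₗ[ℂ] D :=
  (R : X →ₗ[ℂ] X).codRestrict D h.mem

theorem apply_toDomain (h : IsResolvent A lam R) (x : X) :
    A (h.toDomain x) = lam • R x - x := by
  have := h.right_inv x
  rw [sub_eq_iff_eq_add] at this
  rw [this]
  exact (add_sub_cancel_left _ _).symm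

theorem exists_eq_comp (h : IsResolvent A lam R) {a : ℝ} (ha : 0 ≤ a)
    (hB : ∀ d, ‖B d‖ ≤ a * ‖A d‖) : ∃ S : X →L[ℂ] X, ⇑S = B ∘ h.toDomain := by
  refine ⟨(B ∘ₗ h.toDomain).mkContinuous (a * ‖lam • R - 1‖) fun x => ?_, rfl⟩
  calc ‖B (h.toDomain x)‖ ≤ a * ‖(lam • R - 1) x‖ := by
        simpa [h.apply_toDomain] using hB (h.toDomain x)
    _ ≤ a * ‖lam • R - 1‖ * ‖x‖ := by
        rw [mul_assoc]
        exact mul_le_mul_of_nonneg_left ((lam • R - 1).le_opNorm x) ha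

theorem add (h : IsResolvent A lam R) {S U : X →L[ℂ] X} (hS : ⇑S = B ∘ h.toDomain)
    (hU₁ : (1 - S) * U = 1) (hU₂ : U * (1 - S) = 1) : IsResolvent (A + B) lam (R ∘L U) where
  mem x := h.mem (U x)
  right_inv x := by
    calc lam • R (U x) - (A + B) ⟨R (U x), h.mem (U x)⟩
        = (lam • R (U x) - A ⟨R (U x), h.mem (U x)⟩) - S (U x) := by
          rw [LinearMap.add_apply, sub_add_eq_sub_sub, hS]
          rfl
      _ = ((1 - S) * U) x := by rw [h.right_inv, mul_apply_eq_comp, sub_apply, one_apply_eq_self]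
      _ = x := by rw [hU₁, one_apply_eq_self]
  left_inv d := by
    have hSd : S (lam • (d : X) - A d) = B d := by
      rw [hS, Function.comp_apply]
      exact congrArg B (Subtype.ext (h.left_inv d))
    have hUd : U (lam • (d : X) - (A + B) d) = lam • (d : X) - A d := by
      calc U (lam • (d : X) - (A + B) d) = (U * (1 - S)) (lam • (d : X) - A d) := by
            rw [mul_apply_eq_comp, sub_apply, one_apply_eq_self, hSd, LinearMap.add_apply,
              sub_add_eq_sub_sub]
        _ = lam • (d : X) - A d := by rw [hU₂, one_apply_eq_self]
    rw [ContinuousLinearMap.comp_apply, hUd, h.left_inv]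

end IsResolvent

theorem exists_isResolvent_add_of_isRpBoundedWith {X : Type*} [NormedAddCommGroup X]
    [NormedSpace ℂ X] [CompleteSpace X] {D : Submodule ℂ X} {A B : D →ₗ[ℂ] X} {p : ℝ}
    (hp : 1 ≤ p) {Λ : Set ℂ} {R : ℂ → X →L[ℂ] X} (hR : ∀ lam ∈ Λ, IsResolvent A lam (R lam))
    {C C' a : ℝ} (hC : 0 ≤ C) (hC' : 0 ≤ C')
    (hRC : IsRpBoundedWith p {T | ∃ lam ∈ Λ, T = lam • R lam} C)
    (hRC' : IsRpBoundedWith p {T | ∃ lam ∈ Λ, T = lam • R lam - ContinuousLinearMap.id ℂ X} C')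
    (ha : 0 ≤ a) (hB : ∀ d, ‖B d‖ ≤ a * ‖A d‖) (hsmall : a * C' < 1) :
    ∃ RAB : ℂ → X →L[ℂ] X, (∀ lam ∈ Λ, IsResolvent (A + B) lam (RAB lam)) ∧
      IsRpBoundedWith p {T | ∃ lam ∈ Λ, T = lam • RAB lam} (C / (1 - a * C')) := by
  have hp₀ : 0 < p := zero_lt_one.trans_le hp
  have hr : 0 ≤ a * C' := mul_nonneg ha hC'
  choose! S hS using fun lam hlam => (hR lam hlam).exists_eq_comp ha hB
  have hSC : IsRpBoundedWith p (S '' Λ) (a * C') := by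
    refine hRC'.of_comp_le hp₀ ha hB ?_
    rintro _ ⟨lam, hlam, rfl⟩
    exact ⟨(hR lam hlam).toDomain, hS lam hlam, _, ⟨lam, hlam, rfl⟩,
      funext fun x => ((hR lam hlam).apply_toDomain x).symm⟩
  have hS₁ : ∀ lam ∈ Λ, ‖S lam‖ < 1 := fun lam hlam =>
    (hSC.opNorm_le hp₀ hr ⟨lam, hlam, rfl⟩).trans_lt hsmall
  refine ⟨fun lam => R lam ∘L ∑' n, S lam ^ n, fun lam hlam => (hR lam hlam).add (hS lam hlam)
    (mul_neg_geom_series _ (hS₁ lam hlam)) (geom_series_mul_neg _ (hS₁ lam hlam)), ?_⟩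
  rw [div_eq_mul_inv]
  refine (hRC.image2_comp (hSC.image_tsum_pow hp hr hsmall) hC).mono ?_
  rintro _ ⟨lam, hlam, rfl⟩
  exact ⟨lam • R lam, ⟨lam, hlam, rfl⟩, _, ⟨S lam, ⟨lam, hlam, rfl⟩, rfl⟩,
    ContinuousLinearMap.smul_comp _ _ _⟩

theorem perturbation_rSectorial_general
    {X : Type*} [NormedAddCommGroup X] [NormedSpace ℂ X] [CompleteSpace X]
    (p : ℝ) (hp : 1 ≤ p) (θ : ℝ) (hθ1 : 0 < θ)
    (D : Submodule ℂ X)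
    (A : D →ₗ[ℂ] X) (B : D →ₗ[ℂ] X)
    (RA : ℂ → (X →L[ℂ] X))
    (hmem : ∀ lam ∈ Sector θ, ∀ x : X, RA lam x ∈ D)
    (heq1 : ∀ (lam : ℂ) (hlam : lam ∈ Sector θ) (x : X),
      lam • RA lam x - A ⟨RA lam x, hmem lam hlam x⟩ = x)
    (heq2 : ∀ lam ∈ Sector θ, ∀ d : D, RA lam (lam • (d : X) - A d) = (d : X))
    (RθA RtθA : ℝ)
    (hR : IsRpBoundedWith p {T : X →L[ℂ] X | ∃ lam ∈ Sector θ, T = lam • RA lam} RθA)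
    (hRt : IsRpBoundedWith p
      {T : X →L[ℂ] X | ∃ lam ∈ Sector θ,
        T = lam • RA lam - ContinuousLinearMap.id ℂ X} RtθA)
    (a : ℝ) (ha0 : 0 ≤ a) (hB : ∀ d : D, ‖B d‖ ≤ a * ‖A d‖)
    (hsmall : a * RtθA < 1) :
    ∃ RAB : ℂ → (X →L[ℂ] X),
      (∀ lam ∈ Sector θ, ∀ x : X, ∃ hd : RAB lam x ∈ D,
        lam • RAB lam x - (A ⟨RAB lam x, hd⟩ + B ⟨RAB lam x, hd⟩) = x) ∧
      (∀ lam ∈ Sector θ, ∀ d : D, RAB lam (lam • (d : X) - (A d + B d)) = (d : X)) ∧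
      IsRpBoundedWith p {T : X →L[ℂ] X | ∃ lam ∈ Sector θ, T = lam • RAB lam}
        (RθA / (1 - a * RtθA)) := by
  have hp₀ : 0 < p := zero_lt_one.trans_le hp
  -- On the zero space even negative constants are `R_p`-bounds, so it is treated separately.
  rcases subsingleton_or_nontrivial X with hX | hX
  · exact ⟨0, fun _ _ _ => ⟨D.zero_mem, Subsingleton.elim _ _⟩, fun _ _ _ => Subsingleton.elim _ _,
      .of_subsingleton hp₀⟩
  have hone : (1 : ℂ) ∈ Sector θ := ⟨one_ne_zero, by simpa using hθ1⟩
  obtain ⟨RAB, hRAB, hbound⟩ := exists_isResolvent_add_of_isRpBoundedWith hp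
    (fun lam hlam => ⟨hmem lam hlam, heq1 lam hlam, heq2 lam hlam⟩)
    (hR.nonneg hp₀ ⟨1, hone, rfl⟩) (hRt.nonneg hp₀ ⟨1, hone, rfl⟩) hR hRt ha0 hB hsmall
  exact ⟨RAB, fun lam hlam x => ⟨(hRAB lam hlam).mem x, (hRAB lam hlam).right_inv x⟩,
    fun lam hlam => (hRAB lam hlam).left_inv, hbound⟩

/-- **Perturbation of `R`-sectoriality.** Let `A : D → X` be a densely defined
linear operator whose resolvent exists on the sector `Σ_θ` (witnessed by the
family `RA` of bounded operators), such that `{λ(λ−A)^{−1} : λ ∈ Σ_θ}` is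
`R_p`-bounded with bound `RθA` and `{A(λ−A)^{−1} = λ(λ−A)^{−1} − id : λ ∈ Σ_θ}`
is `R_p`-bounded with bound `R̃θA`. If `B` is defined on `D` with
`‖Bx‖ ≤ a ‖Ax‖` for all `x ∈ D` and `a · R̃θA < 1`, then `Σ_θ` lies in the
resolvent set of `A + B` and `{λ(λ−(A+B))^{−1} : λ ∈ Σ_θ}` is `R_p`-bounded
with bound at most `RθA / (1 − a · R̃θA)`; in particular `A + B` is
`R`-sectorial with angle at least `θ`. -/
theorem perturbation_rSectorial
    {X : Type*} [NormedAddCommGroup X] [NormedSpace ℂ X] [CompleteSpace X]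
    (p : ℝ) (hp : 1 ≤ p) (θ : ℝ) (hθ1 : 0 < θ) (hθ2 : θ ≤ Real.pi)
    (D : Submodule ℂ X) (hD : Dense (D : Set X))
    (A : D →ₗ[ℂ] X) (B : D →ₗ[ℂ] X)
    (RA : ℂ → (X →L[ℂ] X))
    (hmem : ∀ lam ∈ Sector θ, ∀ x : X, RA lam x ∈ D)
    (heq1 : ∀ (lam : ℂ) (hlam : lam ∈ Sector θ) (x : X),
      lam • RA lam x - A ⟨RA lam x, hmem lam hlam x⟩ = x)
    (heq2 : ∀ lam ∈ Sector θ, ∀ d : D, RA lam (lam • (d : X) - A d) = (d : X))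
    (RθA RtθA : ℝ)
    (hR : IsRpBoundedWith p {T : X →L[ℂ] X | ∃ lam ∈ Sector θ, T = lam • RA lam} RθA)
    (hRt : IsRpBoundedWith p
      {T : X →L[ℂ] X | ∃ lam ∈ Sector θ,
        T = lam • RA lam - ContinuousLinearMap.id ℂ X} RtθA)
    (a : ℝ) (ha0 : 0 ≤ a) (hB : ∀ d : D, ‖B d‖ ≤ a * ‖A d‖)
    (hsmall : a * RtθA < 1) :
    ∃ RAB : ℂ → (X →L[ℂ] X),
      (∀ lam ∈ Sector θ, ∀ x : X, ∃ hd : RAB lam x ∈ D,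
        lam • RAB lam x - (A ⟨RAB lam x, hd⟩ + B ⟨RAB lam x, hd⟩) = x) ∧
      (∀ lam ∈ Sector θ, ∀ d : D, RAB lam (lam • (d : X) - (A d + B d)) = (d : X)) ∧
      IsRpBoundedWith p {T : X →L[ℂ] X | ∃ lam ∈ Sector θ, T = lam • RAB lam}
        (RθA / (1 - a * RtθA)) :=
  perturbation_rSectorial_general p hp θ hθ1 D A B RA hmem heq1 heq2 RθA RtθA hR hRt a ha0 hB hsmall
end

section
/- Let 1 < p < ∞. There exists a constant C > 0 (depending only on p) such that for every measurable function f : (0,∞) → [0,∞) the one-sided Hilbert transform (Hf)(x) := ∫₀^∞ f(y)/(x+y) dy satisfies (∫₀^∞ (Hf)(x)^p dx)^{1/p} ≤ C · (∫₀^∞ f(y)^p dy)^{1/p}. In particular, H defines a bounded linear operator on L^p((0,∞)). -/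
open scoped ENNReal
open MeasureTheory Set Function

/-!
Schur's test with the weight `y ^ (-1 / (p q))`. Since the kernel `1 / (x + y)` is homogeneous of
degree `-1`, the substitution `y = x t` turns both Schur integrals into `x ^ (-1/p)` and
`y ^ (-1/q)` times `∫₀^∞ t ^ (-a) / (1 + t) dt` with `a = 1/p` and `a = 1/q`; these are finite
because `0 < a < 1`.
-/

section SchurTest

variable {X Y : Type*} [MeasurableSpace X] [MeasurableSpace Y] {p q : ℝ}

theorem rpow_lintegral_weighted_mul_le (ν : Measure Y) (hpq : p.HolderConjugate q)
    {k φ u : Y → ℝ≥0∞} (hk : Measurable k) (hφ : Measurable φ) (hu : Measurable u) :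
    (∫⁻ y, k y * (φ y * u y) ∂ν) ^ p
      ≤ (∫⁻ y, k y * φ y ^ q ∂ν) ^ (p / q) * ∫⁻ y, k y * u y ^ p ∂ν := by
  have holder := ENNReal.lintegral_mul_le_Lp_mul_Lq (ν.withDensity k) hpq.symm
    hφ.aemeasurable hu.aemeasurable
  rw [lintegral_withDensity_eq_lintegral_mul ν hk (hφ.mul hu),
    lintegral_withDensity_eq_lintegral_mul ν hk (hφ.pow_const q),
    lintegral_withDensity_eq_lintegral_mul ν hk (hu.pow_const p)] at holder
  calc (∫⁻ y, k y * (φ y * u y) ∂ν) ^ p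
      ≤ ((∫⁻ y, k y * φ y ^ q ∂ν) ^ (1 / q) * (∫⁻ y, k y * u y ^ p ∂ν) ^ (1 / p)) ^ p :=
        ENNReal.rpow_le_rpow holder hpq.nonneg
    _ = (∫⁻ y, k y * φ y ^ q ∂ν) ^ (p / q) * ∫⁻ y, k y * u y ^ p ∂ν := by
        rw [ENNReal.mul_rpow_of_nonneg _ _ hpq.nonneg, ← ENNReal.rpow_mul, ← ENNReal.rpow_mul,
          one_div_mul_eq_div, one_div_mul_cancel hpq.ne_zero, ENNReal.rpow_one]

theorem lintegral_mul_lintegral_mul_swap {μ : Measure X} {ν : Measure Y} [SFinite μ] [SFinite ν]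
    {K : X → Y → ℝ≥0∞} (hK : Measurable (uncurry K)) {a : X → ℝ≥0∞} {b : Y → ℝ≥0∞}
    (ha : Measurable a) (hb : Measurable b) :
    ∫⁻ x, a x * ∫⁻ y, K x y * b y ∂ν ∂μ = ∫⁻ y, (∫⁻ x, K x y * a x ∂μ) * b y ∂ν := by
  have hKb : Measurable (uncurry fun x y => K x y * b y) := hK.mul (hb.comp measurable_snd)
  calc ∫⁻ x, a x * ∫⁻ y, K x y * b y ∂ν ∂μ
      = ∫⁻ x, ∫⁻ y, a x * (K x y * b y) ∂ν ∂μ :=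
        lintegral_congr fun x => (lintegral_const_mul _ hKb.of_uncurry_left).symm
    _ = ∫⁻ y, ∫⁻ x, a x * (K x y * b y) ∂μ ∂ν :=
        lintegral_lintegral_swap ((ha.comp measurable_fst).mul hKb).aemeasurable
    _ = ∫⁻ y, (∫⁻ x, K x y * a x ∂μ) * b y ∂ν := by
        refine lintegral_congr fun y => ?_
        rw [← lintegral_mul_const _ (by exact hK.of_uncurry_right.mul ha)]
        congr 1 with x
        ring

theorem lintegral_rpow_lintegral_mul_le_of_schur {μ : Measure X} {ν : Measure Y} [SFinite μ]
    [SFinite ν] (hpq : p.HolderConjugate q) {K : X → Y → ℝ≥0∞} (hK : Measurable (uncurry K))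
    {φ : Y → ℝ≥0∞} {ψ : X → ℝ≥0∞} (hφ : Measurable φ) (hψ : Measurable ψ)
    (hφ_ne_zero : ∀ᵐ y ∂ν, φ y ≠ 0) (hφ_ne_top : ∀ᵐ y ∂ν, φ y ≠ ∞) {A B : ℝ≥0∞}
    (hA : ∀ᵐ x ∂μ, ∫⁻ y, K x y * φ y ^ q ∂ν ≤ A * ψ x ^ q)
    (hB : ∀ᵐ y ∂ν, ∫⁻ x, K x y * ψ x ^ p ∂μ ≤ B * φ y ^ p)
    {g : Y → ℝ≥0∞} (hg : Measurable g) :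
    ∫⁻ x, (∫⁻ y, K x y * g y ∂ν) ^ p ∂μ ≤ A ^ (p / q) * B * ∫⁻ y, g y ^ p ∂ν := by
  set u := fun y => g y / φ y
  have hu : Measurable u := hg.div hφ
  have hg_eq : g =ᵐ[ν] fun y => φ y * u y := by
    filter_upwards [hφ_ne_zero, hφ_ne_top] with y h0 htop
    exact (ENNReal.mul_div_cancel h0 htop).symm
  have hpq_div : 0 ≤ p / q := div_nonneg hpq.nonneg hpq.symm.nonneg
  have hpointwise : ∀ᵐ x ∂μ, (∫⁻ y, K x y * g y ∂ν) ^ p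
      ≤ A ^ (p / q) * (ψ x ^ p * ∫⁻ y, K x y * u y ^ p ∂ν) := by
    filter_upwards [hA] with x hAx
    calc (∫⁻ y, K x y * g y ∂ν) ^ p
        = (∫⁻ y, K x y * (φ y * u y) ∂ν) ^ p := by
          rw [lintegral_congr_ae (hg_eq.mono fun y hy => by rw [hy])]
      _ ≤ (∫⁻ y, K x y * φ y ^ q ∂ν) ^ (p / q) * ∫⁻ y, K x y * u y ^ p ∂ν :=
          rpow_lintegral_weighted_mul_le ν hpq hK.of_uncurry_left hφ hu
      _ ≤ (A * ψ x ^ q) ^ (p / q) * ∫⁻ y, K x y * u y ^ p ∂ν := by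
          gcongr
      _ = A ^ (p / q) * (ψ x ^ p * ∫⁻ y, K x y * u y ^ p ∂ν) := by
          rw [ENNReal.mul_rpow_of_nonneg _ _ hpq_div, ← ENNReal.rpow_mul,
            mul_div_cancel₀ _ hpq.symm.ne_zero, mul_assoc]
  have hψKu : Measurable fun x => ψ x ^ p * ∫⁻ y, K x y * u y ^ p ∂ν :=
    (hψ.pow_const p).mul (hK.mul ((hu.comp measurable_snd).pow_const p)).lintegral_prod_right'
  calc ∫⁻ x, (∫⁻ y, K x y * g y ∂ν) ^ p ∂μ
      ≤ ∫⁻ x, A ^ (p / q) * (ψ x ^ p * ∫⁻ y, K x y * u y ^ p ∂ν) ∂μ :=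
        lintegral_mono_ae hpointwise
    _ = A ^ (p / q) * ∫⁻ y, (∫⁻ x, K x y * ψ x ^ p ∂μ) * u y ^ p ∂ν := by
        rw [lintegral_const_mul _ hψKu,
          lintegral_mul_lintegral_mul_swap hK (hψ.pow_const p) (hu.pow_const p)]
    _ ≤ A ^ (p / q) * ∫⁻ y, B * (φ y ^ p * u y ^ p) ∂ν := by
        gcongr _ * ?_
        exact lintegral_mono_ae (hB.mono fun y hy => by rw [← mul_assoc]; gcongr)
    _ = A ^ (p / q) * B * ∫⁻ y, g y ^ p ∂ν := by
        rw [mul_assoc, ← lintegral_const_mul B (by fun_prop)]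
        congr 1
        refine lintegral_congr_ae (hg_eq.mono fun y hy => ?_)
        simp only [hy, ENNReal.mul_rpow_of_nonneg _ _ hpq.nonneg]

end SchurTest

theorem setLIntegral_Ioi_zero_eq_mul_comp_mul_left {c : ℝ} (hc : 0 < c) (g : ℝ → ℝ≥0∞) :
    ∫⁻ y in Ioi 0, g y = ENNReal.ofReal c * ∫⁻ t in Ioi 0, g (c * t) := by
  conv_lhs => rw [← image_const_mul_Ioi_zero hc]
  rw [lintegral_image_eq_lintegral_abs_deriv_mul measurableSet_Ioi
    (fun t _ => (hasDerivAt_const_mul c).hasDerivWithinAt) (mul_right_injective₀ hc.ne').injOn,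
    abs_of_pos hc, lintegral_const_mul' _ _ ENNReal.ofReal_ne_top]

/-- The Mellin transform of `1 / (1 + t)` at `1 - a`, equal to `π / sin (π a)` for `0 < a < 1`. -/
noncomputable def hilbertMellin (a : ℝ) : ℝ≥0∞ :=
  ∫⁻ t in Ioi 0, ENNReal.ofReal (1 + t)⁻¹ * ENNReal.ofReal t ^ (-a)

theorem setLIntegral_Ioi_inv_add_mul_rpow_neg (a : ℝ) {x : ℝ} (hx : 0 < x) :
    ∫⁻ y in Ioi 0, ENNReal.ofReal (x + y)⁻¹ * ENNReal.ofReal y ^ (-a)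
      = ENNReal.ofReal x ^ (-a) * hilbertMellin a := by
  rw [setLIntegral_Ioi_zero_eq_mul_comp_mul_left hx, hilbertMellin, ENNReal.ofReal_rpow_of_pos hx,
    ← lintegral_const_mul' _ _ ENNReal.ofReal_ne_top,
    ← lintegral_const_mul' _ _ ENNReal.ofReal_ne_top]
  refine setLIntegral_congr_fun measurableSet_Ioi fun t (ht : 0 < t) => ?_
  rw [ENNReal.ofReal_rpow_of_pos (mul_pos hx ht), ENNReal.ofReal_rpow_of_pos ht,
    ← ENNReal.ofReal_mul (by positivity), ← ENNReal.ofReal_mul (by positivity),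
    ← ENNReal.ofReal_mul (by positivity), ← ENNReal.ofReal_mul (by positivity)]
  congr 1
  rw [Real.mul_rpow hx.le ht.le, Real.rpow_neg hx.le]
  field_simp

theorem hilbertMellin_lt_top {a : ℝ} (ha₀ : 0 < a) (ha₁ : a < 1) : hilbertMellin a < ∞ := by
  have hint : IntegrableOn (fun t : ℝ => (1 + t)⁻¹ * t ^ (-a)) (Ioi 0) := by
    rw [← Ioc_union_Ioi_eq_Ioi zero_le_one]
    refine IntegrableOn.union ?_ ?_
    · refine (intervalIntegral.intervalIntegrable_rpow' (by linarith : -1 < -a)).1.mono'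
        (by fun_prop) ((ae_restrict_iff' measurableSet_Ioc).2 (.of_forall fun t ht => ?_))
      have ht₀ : 0 < t := ht.1
      rw [Real.norm_of_nonneg (by positivity)]
      exact mul_le_of_le_one_left (by positivity) (inv_le_one_of_one_le₀ (by linarith))
    · refine (integrableOn_Ioi_rpow_of_lt (by linarith : -a - 1 < -1) one_pos).mono'
        (by fun_prop) ((ae_restrict_iff' measurableSet_Ioi).2 (.of_forall fun t (ht : 1 < t) => ?_))
      have ht₀ : 0 < t := by linarith
      rw [Real.norm_of_nonneg (by positivity), Real.rpow_sub_one ht₀.ne', div_eq_inv_mul]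
      gcongr
      linarith
  refine lt_of_eq_of_lt ?_ hint.setLIntegral_lt_top
  refine setLIntegral_congr_fun measurableSet_Ioi fun t (ht : 0 < t) => ?_
  rw [ENNReal.ofReal_rpow_of_pos ht, ← ENNReal.ofReal_mul (by positivity)]

theorem lintegral_rpow_hilbert_le {p q : ℝ} (hpq : p.HolderConjugate q) {g : ℝ → ℝ≥0∞}
    (hg : Measurable g) :
    ∫⁻ x in Ioi 0, (∫⁻ y in Ioi 0, ENNReal.ofReal (x + y)⁻¹ * g y) ^ p
      ≤ hilbertMellin p⁻¹ ^ (p / q) * hilbertMellin q⁻¹ * ∫⁻ y in Ioi 0, g y ^ p := by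
  set w : ℝ → ℝ≥0∞ := fun y => ENNReal.ofReal y ^ (-(p * q)⁻¹)
  have hw_q : ∀ y, w y ^ q = ENNReal.ofReal y ^ (-p⁻¹) := fun y => by
    rw [← ENNReal.rpow_mul, mul_inv, neg_mul, inv_mul_cancel_right₀ hpq.symm.ne_zero]
  have hw_p : ∀ y, w y ^ p = ENNReal.ofReal y ^ (-q⁻¹) := fun y => by
    rw [← ENNReal.rpow_mul, mul_inv, neg_mul, mul_comm p⁻¹, inv_mul_cancel_right₀ hpq.ne_zero]
  have hw_meas : Measurable w := by fun_prop
  refine lintegral_rpow_lintegral_mul_le_of_schur (φ := w) (ψ := w) hpq (by fun_prop) hw_meas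
    hw_meas (.of_forall fun y => ?_) ?_ ?_ ?_ hg
  · simp [w, ENNReal.rpow_eq_zero_iff, hpq.nonneg, hpq.symm.pos]
  · filter_upwards [ae_restrict_mem measurableSet_Ioi] with y (hy : 0 < y)
    simp [w, ENNReal.rpow_eq_top_iff, hy]
  · filter_upwards [ae_restrict_mem measurableSet_Ioi] with x (hx : 0 < x)
    simp only [hw_q, setLIntegral_Ioi_inv_add_mul_rpow_neg _ hx, mul_comm, le_refl]
  · filter_upwards [ae_restrict_mem measurableSet_Ioi] with y (hy : 0 < y)
    simp only [hw_p, add_comm _ y, setLIntegral_Ioi_inv_add_mul_rpow_neg _ hy, mul_comm, le_refl]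

/-- **Boundedness of the one-sided Hilbert transform on `L^p((0,∞))`.**
For `1 < p < ∞` there is a constant `C > 0` (depending only on `p`) such that
for every nonnegative measurable `f` on `(0,∞)`, the function
`(Hf)(x) = ∫₀^∞ f(y)/(x+y) dy` satisfies `‖Hf‖_{L^p} ≤ C ‖f‖_{L^p}`
(both sides possibly infinite). -/
theorem one_sided_hilbert_transform_bounded
    (p : ℝ) (hp : 1 < p) :
    ∃ C : ℝ, 0 < C ∧
      ∀ f : ℝ → ℝ, Measurable f → (∀ x, 0 ≤ f x) →
        (∫⁻ x in Set.Ioi (0 : ℝ),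
            (∫⁻ y in Set.Ioi (0 : ℝ), ENNReal.ofReal (f y / (x + y))) ^ p) ^ (1 / p)
          ≤ ENNReal.ofReal C *
            (∫⁻ y in Set.Ioi (0 : ℝ), ENNReal.ofReal (f y) ^ p) ^ (1 / p) := by
  obtain ⟨q, hpq⟩ : ∃ q, p.HolderConjugate q := ⟨_, .conjExponent hp⟩
  set M := hilbertMellin p⁻¹ ^ (p / q) * hilbertMellin q⁻¹
  have hM : M ≠ ∞ := ENNReal.mul_ne_top
    (ENNReal.rpow_ne_top_of_nonneg (div_nonneg hpq.nonneg hpq.symm.nonneg)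
      (hilbertMellin_lt_top hpq.inv_pos (inv_lt_one_of_one_lt₀ hpq.lt)).ne)
    (hilbertMellin_lt_top hpq.symm.inv_pos (inv_lt_one_of_one_lt₀ hpq.symm.lt)).ne
  refine ⟨(M ^ (1 / p)).toReal + 1, by positivity, fun f hf hf₀ => ?_⟩
  have hdiv : ∀ x y,
      ENNReal.ofReal (f y / (x + y)) = ENNReal.ofReal (x + y)⁻¹ * ENNReal.ofReal (f y) :=
    fun x y => by rw [div_eq_mul_inv, mul_comm, ENNReal.ofReal_mul' (hf₀ y)]
  simp only [hdiv]
  calc _ ≤ (M * ∫⁻ y in Ioi 0, ENNReal.ofReal (f y) ^ p) ^ (1 / p) :=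
        ENNReal.rpow_le_rpow (lintegral_rpow_hilbert_le hpq hf.ennreal_ofReal) hpq.one_div_nonneg
    _ = M ^ (1 / p) * (∫⁻ y in Ioi 0, ENNReal.ofReal (f y) ^ p) ^ (1 / p) :=
        ENNReal.mul_rpow_of_nonneg _ _ hpq.one_div_nonneg
    _ ≤ _ := by
        gcongr
        exact (ENNReal.le_ofReal_iff_toReal_le
          (ENNReal.rpow_ne_top_of_nonneg hpq.one_div_nonneg hM) (by positivity)).2 (by linarith)
end
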